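/- arXiv:2311.08971 — 3 statements merged into one kernel-verified Lean document; each statement's English description precedes it below -/
import Mathlib

section
/- Let n, m be positive natural numbers and let H be a hybrid quantum–classical Hamiltonian on the composite space indexed by Fin n × Fin m, i.e. H = (Matrix.diagonal ε ⊗ₖ 1) + (1 ⊗ₖ H_Q) + ∑ i : Fin n, (γ i : ℂ) • (Matrix.stdBasisMatrix i i 1 ⊗ₖ S i), where ε, γ : Fin n → ℝ, and H_Q and each S i are m×m complex matrices. Then for every o : Fin n → ℝ, the classical observable O_C = Matrix.diagonal o ⊗ₖ 1 commutes with H: (Matrix.diagonal o ⊗ₖ 1) * H = H * (Matrix.diagonal o ⊗ₖ 1). (Theorem 1: in Hamiltonian quantum–classical hybrid dynamics there is no backreaction from the quantum sector to the classical sector — every classical observable is conserved.) -/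
open Matrix Kronecker

/-!
Every term of the hybrid Hamiltonian is a Kronecker product `A ⊗ₖ B` whose classical factor `A`
is diagonal (`diagonal ε`, `1`, or `single i i 1`). Diagonal matrices commute with each other, and
Kronecker products of pairwise commuting factors commute, so `diagonal o ⊗ₖ 1` commutes with
every term and hence with `H`.
-/

theorem Commute.kronecker {l m R : Type*} [Fintype l] [Fintype m] [CommSemiring R]
    {A A' : Matrix l l R} {B B' : Matrix m m R} (hA : Commute A A') (hB : Commute B B') :
    Commute (A ⊗ₖ B) (A' ⊗ₖ B') := by
  rw [commute_iff_eq, ← mul_kronecker_mul, ← mul_kronecker_mul, hA.eq, hB.eq]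

theorem Matrix.commute_diagonal_single {n R : Type*} [Fintype n] [DecidableEq n]
    [CommSemiring R] (d : n → R) (i : n) (r : R) :
    Commute (diagonal d) (single i i r) := by
  rw [← diagonal_single]
  exact commute_diagonal d _

theorem classical_observable_commutes_with_hybrid_hamiltonian_general
    (n m : ℕ)
    (ε γ : Fin n → ℝ)
    (H_Q : Matrix (Fin m) (Fin m) ℂ)
    (S : Fin n → Matrix (Fin m) (Fin m) ℂ)
    (H : Matrix (Fin n × Fin m) (Fin n × Fin m) ℂ)
    (hH : H = (Matrix.diagonal (fun i => (ε i : ℂ)) ⊗ₖ 1)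
        + ((1 : Matrix (Fin n) (Fin n) ℂ) ⊗ₖ H_Q)
        + ∑ i : Fin n, (γ i : ℂ) • (Matrix.single i i 1 ⊗ₖ S i))
    (o : Fin n → ℝ) :
    (Matrix.diagonal (fun i => (o i : ℂ)) ⊗ₖ (1 : Matrix (Fin m) (Fin m) ℂ)) * H
      = H * (Matrix.diagonal (fun i => (o i : ℂ)) ⊗ₖ (1 : Matrix (Fin m) (Fin m) ℂ)) := by
  set d : Fin n → ℂ := fun i => (o i : ℂ)
  have h_energy : Commute (diagonal d ⊗ₖ (1 : Matrix (Fin m) (Fin m) ℂ))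
      (diagonal (fun i => (ε i : ℂ)) ⊗ₖ 1) :=
    (commute_diagonal _ _).kronecker (Commute.refl 1)
  have h_quantum : Commute (diagonal d ⊗ₖ 1) ((1 : Matrix (Fin n) (Fin n) ℂ) ⊗ₖ H_Q) :=
    (Commute.one_right _).kronecker (Commute.one_left _)
  have h_coupling : Commute (diagonal d ⊗ₖ 1)
      (∑ i : Fin n, (γ i : ℂ) • (single i i 1 ⊗ₖ S i)) :=
    Commute.sum_right _ _ _ fun i _ =>
      ((commute_diagonal_single d i 1).kronecker (Commute.one_left _)).smul_right _
  rw [hH]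
  exact ((h_energy.add_right h_quantum).add_right h_coupling).eq

/-- Theorem 1: in Hamiltonian quantum–classical hybrid dynamics there is no
backreaction from the quantum sector to the classical sector — every classical
observable commutes with the hybrid Hamiltonian. -/
theorem classical_observable_commutes_with_hybrid_hamiltonian
    (n m : ℕ) (hn : 0 < n) (hm : 0 < m)
    (ε γ : Fin n → ℝ)
    (H_Q : Matrix (Fin m) (Fin m) ℂ)
    (S : Fin n → Matrix (Fin m) (Fin m) ℂ)
    (H : Matrix (Fin n × Fin m) (Fin n × Fin m) ℂ)
    (hH : H = (Matrix.diagonal (fun i => (ε i : ℂ)) ⊗ₖ 1)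
        + ((1 : Matrix (Fin n) (Fin n) ℂ) ⊗ₖ H_Q)
        + ∑ i : Fin n, (γ i : ℂ) • (Matrix.single i i 1 ⊗ₖ S i))
    (o : Fin n → ℝ) :
    (Matrix.diagonal (fun i => (o i : ℂ)) ⊗ₖ (1 : Matrix (Fin m) (Fin m) ℂ)) * H
      = H * (Matrix.diagonal (fun i => (o i : ℂ)) ⊗ₖ (1 : Matrix (Fin m) (Fin m) ℂ)) :=
  classical_observable_commutes_with_hybrid_hamiltonian_general n m ε γ H_Q S H hH o
end

section
/- Let H be a hybrid quantum–classical Hamiltonian on Fin n × Fin m, H = (Matrix.diagonal ε ⊗ₖ 1) + (1 ⊗ₖ H_Q) + ∑ i, (γ i : ℂ) • (Matrix.stdBasisMatrix i i 1 ⊗ₖ S i), let o : Fin n → ℝ and O_Q an m×m complex matrix, and suppose the total observable (Matrix.diagonal o ⊗ₖ 1) + (1 ⊗ₖ O_Q) commutes with H. Then for every t : ℝ and every complex matrix ρ indexed by Fin n × Fin m, the local quantum expectation is invariant under the hybrid evolution: Matrix.trace ((1 ⊗ₖ O_Q) * (Matrix.exp ℂ (-(t • Complex.I) • H) * ρ *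 Matrix.exp ℂ ((t • Complex.I) • H))) = Matrix.trace ((1 ⊗ₖ O_Q) * ρ). (Under momentum/energy conservation, a classical gravitational field obeying Hamiltonian hybrid dynamics cannot change the momentum/energy of a quantum system.) -/
open Matrix Kronecker

/-!
Every term of a hybrid Hamiltonian is of the form `D ⊗ₖ A` with `D` diagonal on the classical
sector, so any classical observable `diagonal o ⊗ₖ 1` commutes with `H`. Subtracting it from the
conserved total observable shows that the local quantum observable `1 ⊗ₖ O_Q` commutes with `H`,
hence with the propagator `exp (-(t • I) • H)`, and cyclicity of the trace then removes the
propagator from the expectation value.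
-/

namespace Matrix

variable {ι κ : Type*} [Fintype ι] [Fintype κ]

theorem _root_.Commute.kronecker_s7 {α : Type*} [CommSemiring α] {A A' : Matrix ι ι α}
    {B B' : Matrix κ κ α} (hA : Commute A A') (hB : Commute B B') :
    Commute (A ⊗ₖ B) (A' ⊗ₖ B') := by
  rw [Commute, SemiconjBy, ← mul_kronecker_mul, ← mul_kronecker_mul, hA.eq, hB.eq]

theorem commute_diagonal_kronecker_one_hybrid [DecidableEq ι] [DecidableEq κ] {α : Type*}
    [CommSemiring α] (o ε γ : ι → α) (H_Q : Matrix κ κ α) (S : ι → Matrix κ κ α) :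
    Commute (diagonal o ⊗ₖ (1 : Matrix κ κ α))
      ((diagonal ε ⊗ₖ 1) + ((1 : Matrix ι ι α) ⊗ₖ H_Q) + ∑ i, γ i • (single i i 1 ⊗ₖ S i)) := by
  have h_local : Commute (diagonal o ⊗ₖ (1 : Matrix κ κ α)) ((1 : Matrix ι ι α) ⊗ₖ H_Q) :=
    (Commute.one_right _).kronecker_s7 (Commute.one_left _)
  have h_coupling (i : ι) : Commute (diagonal o ⊗ₖ (1 : Matrix κ κ α)) (single i i 1 ⊗ₖ S i) :=
    (diagonal_single i (1 : α) ▸ commute_diagonal o _).kronecker_s7 (Commute.one_left (S i))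
  refine ((commute_diagonal o ε).kronecker_s7 (Commute.refl _)).add_right h_local |>.add_right ?_
  exact Commute.sum_right _ _ _ fun i _ => (h_coupling i).smul_right _

theorem trace_mul_conj_of_commute [DecidableEq ι] {α : Type*} [CommSemiring α]
    {O U V : Matrix ι ι α}
    (hOU : Commute O U) (hVU : V * U = 1) (ρ : Matrix ι ι α) :
    trace (O * (U * ρ * V)) = trace (O * ρ) := by
  calc trace (O * (U * ρ * V)) = trace (U * (O * ρ * V)) := by
        simp only [← Matrix.mul_assoc, hOU.eq]
    _ = trace (O * ρ * (V * U)) := by rw [trace_mul_comm, Matrix.mul_assoc]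
    _ = trace (O * ρ) := by rw [hVU, Matrix.mul_one]

theorem trace_mul_exp_conj_of_commute [DecidableEq ι] {𝔸 : Type*} [NormedCommRing 𝔸]
    [NormedAlgebra ℚ 𝔸] [CompleteSpace 𝔸] {O X : Matrix ι ι 𝔸} (hOX : Commute O X)
    (ρ : Matrix ι ι 𝔸) :
    trace (O * (NormedSpace.exp (-X) * ρ * NormedSpace.exp X)) = trace (O * ρ) := by
  refine trace_mul_conj_of_commute hOX.neg_right.exp_right ?_ ρ
  rw [← exp_add_of_commute _ _ (Commute.refl X).neg_right, add_neg_cancel, NormedSpace.exp_zero]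

end Matrix

/-- Under conservation of a global additive observable, a hybrid
quantum–classical Hamiltonian evolution cannot change the expectation value of
the local quantum observable. -/
theorem quantum_expectation_conserved_under_hybrid_evolution
    (n m : ℕ)
    (ε γ : Fin n → ℝ)
    (H_Q : Matrix (Fin m) (Fin m) ℂ)
    (S : Fin n → Matrix (Fin m) (Fin m) ℂ)
    (H : Matrix (Fin n × Fin m) (Fin n × Fin m) ℂ)
    (hH : H = (Matrix.diagonal (fun i => (ε i : ℂ)) ⊗ₖ 1)
        + ((1 : Matrix (Fin n) (Fin n) ℂ) ⊗ₖ H_Q)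
        + ∑ i : Fin n, (γ i : ℂ) • (Matrix.single i i 1 ⊗ₖ S i))
    (o : Fin n → ℝ) (O_Q : Matrix (Fin m) (Fin m) ℂ)
    (hcons : Commute ((Matrix.diagonal (fun i => (o i : ℂ)) ⊗ₖ (1 : Matrix (Fin m) (Fin m) ℂ))
        + ((1 : Matrix (Fin n) (Fin n) ℂ) ⊗ₖ O_Q)) H)
    (t : ℝ) (ρ : Matrix (Fin n × Fin m) (Fin n × Fin m) ℂ) :
    Matrix.trace (((1 : Matrix (Fin n) (Fin n) ℂ) ⊗ₖ O_Q)
        * (NormedSpace.exp (-(t • Complex.I) • H) * ρ * NormedSpace.exp ((t • Complex.I) • H)))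
      = Matrix.trace (((1 : Matrix (Fin n) (Fin n) ℂ) ⊗ₖ O_Q) * ρ) := by
  have h_classical : Commute (diagonal (fun i => (o i : ℂ)) ⊗ₖ (1 : Matrix (Fin m) (Fin m) ℂ)) H :=
    hH ▸ commute_diagonal_kronecker_one_hybrid _ _ (fun i => (γ i : ℂ)) H_Q S
  have h_quantum : Commute ((1 : Matrix (Fin n) (Fin n) ℂ) ⊗ₖ O_Q) H := by
    simpa using hcons.sub_left h_classical
  rw [neg_smul]
  exact trace_mul_exp_conj_of_commute (h_quantum.smul_right _) ρ
end

section
/- There exist Hermitian matrices A B : Matrix (Fin 2) (Fin 2) ℂ, a matrix U : Matrix (Fin 2 × Fin 2) (Fin 2 × Fin 2) ℂ with U * Uᴴ = 1 and Uᴴ * U = 1, and a positive semidefinite matrix ρ : Matrix (Fin 2 × Fin 2) (Fin 2 × Fin 2) ℂ with Matrix.trace ρ = 1, such that U commutes with the total additive observable, U * ((A ⊗ₖ 1) + (1 ⊗ₖ B)) = ((A ⊗ₖ 1) + (1 ⊗ₖ B)) * U, and yet the local expectation changes: Matrix.trace ((A ⊗ₖ 1) * (U * ρ * Uᴴ)) ≠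 Matrix.trace ((A ⊗ₖ 1) * ρ). (Fully quantum dynamics can exchange a conserved additive quantity between subsystems: the total observable is conserved while local observables change, in contrast with quantum–classical hybrid dynamics.) -/
open Matrix Kronecker
open scoped ComplexOrder

noncomputable def Amat : Matrix (Fin 2) (Fin 2) ℂ := Matrix.diagonal ![1, -1]

noncomputable def Umat : Matrix (Fin 2 × Fin 2) (Fin 2 × Fin 2) ℂ :=
  Matrix.of fun p q => if p.1 = q.2 ∧ p.2 = q.1 then 1 else 0

noncomputable def rho : Matrix (Fin 2 × Fin 2) (Fin 2 × Fin 2) ℂ :=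
  Matrix.diagonal fun p => if p = (0, 1) then 1 else 0

/-- Fully quantum dynamics can exchange a conserved additive quantity between
subsystems: there are local Hermitian observables A, B, a unitary U commuting
with the total observable A ⊗ 1 + 1 ⊗ B, and a density matrix ρ such that the
local expectation of A changes under the evolution ρ ↦ U ρ Uᴴ. -/
theorem exists_quantum_dynamics_exchanging_conserved_quantity :
    ∃ (A B : Matrix (Fin 2) (Fin 2) ℂ)
      (U ρ : Matrix (Fin 2 × Fin 2) (Fin 2 × Fin 2) ℂ),
      A.IsHermitian ∧ B.IsHermitian ∧
      U * Uᴴ = 1 ∧ Uᴴ * U = 1 ∧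
      ρ.PosSemidef ∧ Matrix.trace ρ = 1 ∧
      U * ((A ⊗ₖ (1 : Matrix (Fin 2) (Fin 2) ℂ)) + ((1 : Matrix (Fin 2) (Fin 2) ℂ) ⊗ₖ B))
        = ((A ⊗ₖ (1 : Matrix (Fin 2) (Fin 2) ℂ)) + ((1 : Matrix (Fin 2) (Fin 2) ℂ) ⊗ₖ B)) * U ∧
      Matrix.trace ((A ⊗ₖ (1 : Matrix (Fin 2) (Fin 2) ℂ)) * (U * ρ * Uᴴ))
        ≠ Matrix.trace ((A ⊗ₖ (1 : Matrix (Fin 2) (Fin 2) ℂ)) * ρ) := by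
  refine ⟨Amat, Amat, Umat, rho, ?_, ?_, ?_, ?_, ?_, ?_, ?_, ?_⟩
  · unfold Amat
    apply Matrix.isHermitian_diagonal_of_self_adjoint
    rw [_root_.IsSelfAdjoint]
    funext i; fin_cases i <;> simp
  · unfold Amat
    apply Matrix.isHermitian_diagonal_of_self_adjoint
    rw [_root_.IsSelfAdjoint]
    funext i; fin_cases i <;> simp
  · ext ⟨i, j⟩ ⟨k, l⟩
    fin_cases i <;> fin_cases j <;> fin_cases k <;> fin_cases l <;>
      simp [Umat, Matrix.mul_apply, Fintype.sum_prod_type, Fin.sum_univ_succ,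
        Matrix.one_apply, Prod.ext_iff]
  · ext ⟨i, j⟩ ⟨k, l⟩
    fin_cases i <;> fin_cases j <;> fin_cases k <;> fin_cases l <;>
      simp [Umat, Matrix.mul_apply, Fintype.sum_prod_type, Fin.sum_univ_succ,
        Matrix.one_apply, Prod.ext_iff]
  · apply Matrix.posSemidef_diagonal_iff.mpr
    intro p; by_cases h : p = (0, 1) <;> simp [rho, h]
  · simp [rho, Matrix.trace_diagonal, Fintype.sum_prod_type, Fin.sum_univ_succ]
  · ext ⟨i, j⟩ ⟨k, l⟩
    fin_cases i <;> fin_cases j <;> fin_cases k <;> fin_cases l <;>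
      simp [Umat, Amat, Matrix.mul_apply, Matrix.kroneckerMap_apply,
        Fintype.sum_prod_type, Fin.sum_univ_succ, Matrix.one_apply,
        Matrix.diagonal, Prod.ext_iff]
  · simp [Umat, Amat, rho, Matrix.trace, Matrix.diag, Matrix.mul_apply,
      Matrix.kroneckerMap_apply, Fintype.sum_prod_type, Fin.sum_univ_succ,
      Matrix.one_apply, Matrix.diagonal, Prod.ext_iff]
    norm_num
end
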